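/- arXiv:1903.02337 — 3 statements merged into one kernel-verified Lean document; each statement's English description precedes it below -/
import Mathlib

section
/- For every t ≥ 0 and positive integer L, A(L,t)/L ≤ A(L+1,t)/(L+1); i.e., the expected fraction of jobs remaining after time t from an initial queue of size L is nondecreasing in L. -/
noncomputable def alphaP (t : ℝ) (l : ℕ) : ℝ := t ^ l * Real.exp (-t) / l.factorial

noncomputable def Aq (L : ℕ) (t : ℝ) : ℝ :=
  ∑ l ∈ Finset.range (L + 1), ((L : ℝ) - l) * alphaP t l

noncomputable def Bq (L : ℕ) (t : ℝ) : ℝ :=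
  (∑ l ∈ Finset.range (L + 1), (l : ℝ) * alphaP t l)
    + (L : ℝ) * ∑' k : ℕ, alphaP t (L + 1 + k)

theorem A_div_mono (t : ℝ) (ht : 0 ≤ t) (L : ℕ) (hL : 1 ≤ L) :
    Aq L t / L ≤ Aq (L + 1) t / (L + 1) := by
  have hpos : (0 : ℝ) < L := by exact_mod_cast hL
  rw [div_le_div_iff₀ hpos (by positivity)]
  have hAq : Aq (L + 1) t
      = ∑ l ∈ Finset.range (L + 1), (((L : ℝ) + 1) - l) * alphaP t l := by
    rw [Aq, Finset.sum_range_succ]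
    push_cast
    ring_nf
  rw [hAq, Aq, Finset.sum_mul, Finset.sum_mul]
  apply Finset.sum_le_sum
  intro l hl
  have hl' : (l : ℝ) ≤ L := by
    exact_mod_cast Nat.lt_succ_iff.mp (Finset.mem_range.mp hl)
  have ha : 0 ≤ alphaP t l := by unfold alphaP; positivity
  push_cast
  nlinarith [mul_nonneg (Nat.cast_nonneg l : (0:ℝ) ≤ l) ha]
end

section
/- For every t ≥ 0 and nonnegative integers l ≤ L with L ≥ 1, A(l,t) ≤ (l/L) · A(L,t). -/
lemma alphaP_nonneg {t : ℝ} (ht : 0 ≤ t) (l : ℕ) : 0 ≤ alphaP t l := by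
  unfold alphaP; positivity

lemma Aq_succ (L : ℕ) (t : ℝ) :
    Aq (L + 1) t = Aq L t + ∑ k ∈ Finset.range (L + 1), alphaP t k := by
  unfold Aq
  rw [Finset.sum_range_succ, ← Finset.sum_add_distrib]
  push_cast
  rw [Finset.sum_congr rfl (fun k _ => by ring :
    ∀ k ∈ Finset.range (L + 1),
      ((L : ℝ) + 1 - k) * alphaP t k = ((L : ℝ) - k) * alphaP t k + alphaP t k)]
  ring

lemma Aq_le {t : ℝ} (ht : 0 ≤ t) (L : ℕ) :
    Aq L t ≤ (L : ℝ) * ∑ k ∈ Finset.range (L + 1), alphaP t k := by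
  unfold Aq
  rw [Finset.mul_sum]
  apply Finset.sum_le_sum
  intro k hk
  have hk' : (k : ℝ) ≥ 0 := Nat.cast_nonneg k
  have := alphaP_nonneg ht k
  nlinarith

lemma key {t : ℝ} (ht : 0 ≤ t) (L : ℕ) :
    ((L : ℝ) + 1) * Aq L t ≤ (L : ℝ) * Aq (L + 1) t := by
  rw [Aq_succ]
  have h := Aq_le ht L
  nlinarith

lemma Aq_nonneg {t : ℝ} (ht : 0 ≤ t) (L : ℕ) : 0 ≤ Aq L t := by
  unfold Aq
  apply Finset.sum_nonneg
  intro k hk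
  have hk' : k ≤ L := Nat.lt_succ_iff.mp (Finset.mem_range.mp hk)
  have : (k : ℝ) ≤ L := by exact_mod_cast hk'
  have := alphaP_nonneg ht k
  nlinarith

lemma mono {t : ℝ} (ht : 0 ≤ t) (l : ℕ) (hl : 1 ≤ l) :
    ∀ L, l ≤ L → (L : ℝ) * Aq l t ≤ (l : ℝ) * Aq L t := by
  intro L
  induction L with
  | zero => intro h; omega
  | succ M ih =>
    intro h
    rcases Nat.lt_or_ge M l with hM | hM
    · have : l = M + 1 := by omega
      subst this; exact le_refl _
    · have h1 := ih hM
      have h2 := key ht M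
      have hMpos : (0 : ℝ) < M := by exact_mod_cast Nat.lt_of_lt_of_le hl hM
      have hlpos : (0 : ℝ) < l := by exact_mod_cast hl
      -- (M+1) * Aq l ≤ l * Aq (M+1)
      have step : (M : ℝ) * (((M : ℝ) + 1) * Aq l t) ≤ (M : ℝ) * ((l : ℝ) * Aq (M + 1) t) := by
        calc (M : ℝ) * (((M : ℝ) + 1) * Aq l t) = ((M : ℝ) + 1) * ((M : ℝ) * Aq l t) := by ring
        _ ≤ ((M : ℝ) + 1) * ((l : ℝ) * Aq M t) := by
            apply mul_le_mul_of_nonneg_left h1; positivity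
        _ = (l : ℝ) * (((M : ℝ) + 1) * Aq M t) := by ring
        _ ≤ (l : ℝ) * ((M : ℝ) * Aq (M + 1) t) := by
            apply mul_le_mul_of_nonneg_left h2; positivity
        _ = (M : ℝ) * ((l : ℝ) * Aq (M + 1) t) := by ring
      have := le_of_mul_le_mul_left step hMpos
      push_cast
      linarith

theorem A_le_frac (t : ℝ) (ht : 0 ≤ t) (l L : ℕ) (hL : 1 ≤ L) (hl : l ≤ L) :
    Aq l t ≤ (l : ℝ) / L * Aq L t := by
  rcases Nat.eq_zero_or_pos l with h0 | hpos
  · subst h0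
    have : Aq 0 t = 0 := by unfold Aq; simp
    rw [this]
    simp
  · have h := mono ht l hpos L hl
    have hLpos : (0 : ℝ) < L := by exact_mod_cast hL
    rw [div_mul_eq_mul_div, le_div_iff₀ hLpos]
    linarith
end

section
/- For 0 < λ < 1 and δ > 0, the function h(ν) = a^{m+1} + a² b^{m-1} δ² / ((1+ν)(δ+ν)), with a = 1/(1+δ) and b = 1/(1+δ+ν), is strictly decreasing in ν on (0,∞), satisfies lim_{ν↓0} h(ν) = (1/(1+δ))^m and lim_{ν→∞} h(ν) = (1/(1+δ))^{m+1}; hence if (1/(1+δ))^{m+1} < 1-λ ≤ (1/(1+δ))^m, the equation h(ν) = 1-λ has a unique solution ν ≥ 0. -/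
/-!
Write `h(ν) = a^{m+1} + a²δ² · b(ν)^{m-1} / ((1 + ν)(δ + ν))`. The second summand is a positive
constant times a continuous function on `[0, ∞)` whose numerator decreases and whose denominator
strictly increases to `∞`, so `h` is continuous and strictly decreasing there, with
`h(0) = a^{m+1}(1 + δ) = a^m` and `h(ν) → a^{m+1}`. The intermediate value theorem on a large
interval `[0, ν₁]` gives a root of `h = 1 - λ`, and strict monotonicity makes it unique.
-/

open Set Filter Topology

theorem StrictAntiOn.existsUnique_eq_of_tendsto_atTop {α β : Type*}
    [ConditionallyCompleteLinearOrder α] [TopologicalSpace α] [OrderTopology α] [DenselyOrdered α]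
    [LinearOrder β] [TopologicalSpace β] [OrderTopology β]
    {f : α → β} {a : α} {c L : β}
    (hanti : StrictAntiOn f (Ici a)) (hcont : ContinuousOn f (Ici a))
    (hlim : Tendsto f atTop (𝓝 L)) (hL : L < c) (hc : c ≤ f a) :
    ∃! x, a ≤ x ∧ f x = c := by
  obtain ⟨b, hfb, hab⟩ :=
    ((hlim.eventually (gt_mem_nhds hL)).and (eventually_ge_atTop a)).exists
  obtain ⟨x, hx, hfx⟩ :=
    intermediate_value_Icc' hab (hcont.mono Icc_subset_Ici_self) ⟨hfb.le, hc⟩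
  exact ⟨x, ⟨hx.1, hfx⟩, fun y ⟨hy, hfy⟩ => hanti.injOn hy hx.1 (hfy.trans hfx.symm)⟩

noncomputable def profileTail (δ : ℝ) (n : ℕ) (ν : ℝ) : ℝ :=
  (1 / (1 + δ + ν)) ^ n / ((1 + ν) * (δ + ν))

section profileTail

variable {δ : ℝ} (n : ℕ)

theorem profileTail_zero : profileTail δ n 0 = (1 / (1 + δ)) ^ n / δ := by
  simp [profileTail]

theorem strictAntiOn_profileTail (hδ : 0 < δ) : StrictAntiOn (profileTail δ n) (Ici 0) := by
  intro x (hx : 0 ≤ x) y (hy : 0 ≤ y) hxy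
  exact div_lt_div₀' (by gcongr) (by gcongr) (by positivity) (by positivity)

theorem continuousOn_profileTail (hδ : 0 < δ) : ContinuousOn (profileTail δ n) (Ici 0) := by
  intro x (hx : 0 ≤ x)
  unfold profileTail
  apply ContinuousAt.continuousWithinAt
  fun_prop (disch := positivity)

theorem tendsto_profileTail_atTop : Tendsto (profileTail δ n) atTop (𝓝 0) := by
  have hb : Tendsto (fun ν : ℝ => 1 / (1 + δ + ν)) atTop (𝓝 0) :=
    tendsto_const_nhds.div_atTop (tendsto_atTop_add_const_left _ _ tendsto_id)
  exact (hb.pow n).div_atTop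
    ((tendsto_atTop_add_const_left _ 1 tendsto_id).atTop_mul_atTop₀
      (tendsto_atTop_add_const_left _ δ tendsto_id))

end profileTail

noncomputable def profile (δ : ℝ) (m : ℕ) (ν : ℝ) : ℝ :=
  (1 / (1 + δ)) ^ (m + 1) +
    (1 / (1 + δ)) ^ 2 * (1 / (1 + δ + ν)) ^ (m - 1) * δ ^ 2 / ((1 + ν) * (δ + ν))

section profile

variable {δ : ℝ} {m : ℕ}

theorem profile_eq_add_mul_profileTail (δ : ℝ) (m : ℕ) (ν : ℝ) :
    profile δ m ν =
      (1 / (1 + δ)) ^ (m + 1) + (1 / (1 + δ)) ^ 2 * δ ^ 2 * profileTail δ (m - 1) ν := by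
  simp only [profile, profileTail]
  ring

theorem profile_zero (hm : 1 ≤ m) (hδ : 0 < δ) : profile δ m 0 = (1 / (1 + δ)) ^ m := by
  obtain ⟨k, rfl⟩ := Nat.exists_eq_add_of_le' hm
  rw [profile_eq_add_mul_profileTail, Nat.add_sub_cancel, profileTail_zero]
  have ha : 1 / (1 + δ) * (1 + δ) = 1 := one_div_mul_cancel (by positivity)
  generalize 1 / (1 + δ) = a at ha ⊢
  field_simp
  linear_combination a ^ (k + 1) * ha

theorem strictAntiOn_profile (hδ : 0 < δ) : StrictAntiOn (profile δ m) (Ici 0) := by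
  intro x hx y hy hxy
  simp only [profile_eq_add_mul_profileTail]
  have := strictAntiOn_profileTail (m - 1) hδ hx hy hxy
  gcongr

theorem continuousOn_profile (hδ : 0 < δ) : ContinuousOn (profile δ m) (Ici 0) :=
  (continuousOn_const.add (continuousOn_const.mul (continuousOn_profileTail _ hδ))).congr
    fun ν _ => profile_eq_add_mul_profileTail δ m ν

theorem tendsto_profile_atTop (δ : ℝ) (m : ℕ) :
    Tendsto (profile δ m) atTop (𝓝 ((1 / (1 + δ)) ^ (m + 1))) := by
  have := tendsto_const_nhds (x := (1 / (1 + δ)) ^ (m + 1)) |>.add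
    ((tendsto_profileTail_atTop (δ := δ) (m - 1)).const_mul ((1 / (1 + δ)) ^ 2 * δ ^ 2))
  rw [mul_zero, add_zero] at this
  exact this.congr fun ν => (profile_eq_add_mul_profileTail δ m ν).symm

end profile

theorem h_unique_root_general (lam δ : ℝ) (m : ℕ) (hm : 1 ≤ m) (hδ : 0 < δ)
    (hlow : (1 / (1 + δ)) ^ (m + 1) < 1 - lam) (hhigh : 1 - lam ≤ (1 / (1 + δ)) ^ m) :
    StrictAntiOn
      (fun ν : ℝ => (1 / (1 + δ)) ^ (m + 1) +
        (1 / (1 + δ)) ^ 2 * (1 / (1 + δ + ν)) ^ (m - 1) * δ ^ 2 / ((1 + ν) * (δ + ν)))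
      (Set.Ioi 0) ∧
    Filter.Tendsto
      (fun ν : ℝ => (1 / (1 + δ)) ^ (m + 1) +
        (1 / (1 + δ)) ^ 2 * (1 / (1 + δ + ν)) ^ (m - 1) * δ ^ 2 / ((1 + ν) * (δ + ν)))
      (nhdsWithin 0 (Set.Ioi 0)) (nhds ((1 / (1 + δ)) ^ m)) ∧
    Filter.Tendsto
      (fun ν : ℝ => (1 / (1 + δ)) ^ (m + 1) +
        (1 / (1 + δ)) ^ 2 * (1 / (1 + δ + ν)) ^ (m - 1) * δ ^ 2 / ((1 + ν) * (δ + ν)))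
      Filter.atTop (nhds ((1 / (1 + δ)) ^ (m + 1))) ∧
    ∃! ν : ℝ, 0 ≤ ν ∧
      (1 / (1 + δ)) ^ (m + 1) +
        (1 / (1 + δ)) ^ 2 * (1 / (1 + δ + ν)) ^ (m - 1) * δ ^ 2 / ((1 + ν) * (δ + ν))
        = 1 - lam := by
  have hanti := strictAntiOn_profile (m := m) hδ
  have hcont := continuousOn_profile (m := m) hδ
  have hzero := profile_zero hm hδ
  refine ⟨hanti.mono Ioi_subset_Ici_self, ?_, tendsto_profile_atTop δ m,
    hanti.existsUnique_eq_of_tendsto_atTop hcont (tendsto_profile_atTop δ m) hlow (hzero ▸ hhigh)⟩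
  rw [← hzero]
  exact (hcont 0 self_mem_Ici).tendsto.mono_left (nhdsWithin_mono _ Ioi_subset_Ici_self)

theorem h_unique_root (lam δ : ℝ) (m : ℕ) (hm : 1 ≤ m) (hδ : 0 < δ)
    (hlam0 : 0 < lam) (hlam1 : lam < 1)
    (hlow : (1 / (1 + δ)) ^ (m + 1) < 1 - lam) (hhigh : 1 - lam ≤ (1 / (1 + δ)) ^ m) :
    StrictAntiOn
      (fun ν : ℝ => (1 / (1 + δ)) ^ (m + 1) +
        (1 / (1 + δ)) ^ 2 * (1 / (1 + δ + ν)) ^ (m - 1) * δ ^ 2 / ((1 + ν) * (δ + ν)))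
      (Set.Ioi 0) ∧
    Filter.Tendsto
      (fun ν : ℝ => (1 / (1 + δ)) ^ (m + 1) +
        (1 / (1 + δ)) ^ 2 * (1 / (1 + δ + ν)) ^ (m - 1) * δ ^ 2 / ((1 + ν) * (δ + ν)))
      (nhdsWithin 0 (Set.Ioi 0)) (nhds ((1 / (1 + δ)) ^ m)) ∧
    Filter.Tendsto
      (fun ν : ℝ => (1 / (1 + δ)) ^ (m + 1) +
        (1 / (1 + δ)) ^ 2 * (1 / (1 + δ + ν)) ^ (m - 1) * δ ^ 2 / ((1 + ν) * (δ + ν)))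
      Filter.atTop (nhds ((1 / (1 + δ)) ^ (m + 1))) ∧
    ∃! ν : ℝ, 0 ≤ ν ∧
      (1 / (1 + δ)) ^ (m + 1) +
        (1 / (1 + δ)) ^ 2 * (1 / (1 + δ + ν)) ^ (m - 1) * δ ^ 2 / ((1 + ν) * (δ + ν))
        = 1 - lam :=
  h_unique_root_general lam δ m hm hδ hlow hhigh
end
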